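/- arXiv:2509.05044 — 4 statements merged into one kernel-verified Lean document; each statement's English description precedes it below -/
import Mathlib

section
/- Let A be a finitely generated totally ordered Abelian group and B a convex subgroup of A. Then A is isomorphic as an ordered group to the lexicographic product (A/B) ×ₗ B. -/
/-!
Convexity of `B` makes `A ⧸ B` torsion-free (`0 ≤ x ≤ n • x`), so the finitely generated group
`A ⧸ B` is free and the quotient map has an additive section `s`; then
`x ↦ (x + B, x - s (x + B))` identifies `A` with `(A ⧸ B) × B`. Ordering `A ⧸ B` by the image of
the nonnegative cone of `A` (a cone again by convexity) makes this identification an order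
isomorphism onto the lexicographic product. The quotient is taken as a `Shrink` of the countable
group `A ⧸ B`, so that it can live in any universe.
-/

open Function

theorem AddGroup.FG.countable {G : Type*} [AddCommGroup G] (hG : AddGroup.FG G) : Countable G := by
  have := Module.Finite.iff_addGroup_fg.mpr hG
  obtain ⟨n, f, hf⟩ := Module.Finite.exists_fin' ℤ G
  exact hf.countable

namespace AddSubgroup

variable {A : Type*} [AddCommGroup A] [LinearOrder A] [IsOrderedAddMonoid A]

def IsConvex (B : AddSubgroup A) : Prop :=
  ∀ x y : A, y ∈ B → 0 ≤ x → x ≤ y → x ∈ B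

variable {B : AddSubgroup A}

theorem IsConvex.mem_of_nsmul_mem (hB : B.IsConvex) {n : ℕ} (hn : n ≠ 0) {x : A}
    (hx : n • x ∈ B) : x ∈ B := by
  wlog hx0 : 0 ≤ x generalizing x
  · simpa using this (by simpa using B.neg_mem hx) (neg_nonneg.mpr (le_of_not_ge hx0))
  exact hB x _ hx hx0 (le_self_nsmul hx0 hn)

theorem IsConvex.mem_left_of_add_mem (hB : B.IsConvex) {x y : A} (hx : 0 ≤ x) (hy : 0 ≤ y)
    (hxy : x + y ∈ B) : x ∈ B :=
  hB x _ hxy hx (le_add_of_nonneg_right hy)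

end AddSubgroup

namespace AddMonoidHom

section ConvexKernel

variable {A C : Type*} [AddCommGroup A] [LinearOrder A] [IsOrderedAddMonoid A] [AddCommGroup C]
  {π : A →+ C}

theorem isAddTorsionFree_of_isConvex_ker (hπ : Surjective π) (hker : π.ker.IsConvex) :
    IsAddTorsionFree C where
  nsmul_right_injective n hn a b hab := by
    obtain ⟨x, rfl⟩ := hπ a
    obtain ⟨y, rfl⟩ := hπ b
    have : n • (x - y) ∈ π.ker := by simpa [mem_ker, nsmul_sub, sub_eq_zero] using hab
    simpa [mem_ker, sub_eq_zero] using hker.mem_of_nsmul_mem hn this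

variable (π) in
def imageCone (hker : π.ker.IsConvex) : AddGroupCone C where
  toAddSubmonoid := (AddGroupCone.nonneg A).toAddSubmonoid.map π
  eq_zero_of_mem_of_neg_mem' := by
    rintro - ⟨x, hx, rfl⟩ ⟨y, hy, hxy⟩
    have : x + y ∈ π.ker := by simp [mem_ker, hxy]
    exact hker.mem_left_of_add_mem hx hy this

theorem mem_imageCone (hker : π.ker.IsConvex) {x : A} (hx : 0 ≤ x) : π x ∈ π.imageCone hker :=
  ⟨x, hx, rfl⟩

theorem hasMemOrNegMem_imageCone (hπ : Surjective π) (hker : π.ker.IsConvex) :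
    HasMemOrNegMem (π.imageCone hker) where
  mem_or_neg_mem a := by
    obtain ⟨x, rfl⟩ := hπ a
    rcases le_total 0 x with hx | hx
    · exact .inl (mem_imageCone hker hx)
    · exact .inr (by simpa using mem_imageCone hker (neg_nonneg.mpr hx))

theorem exists_linearOrder_monotone_of_isConvex_ker (hπ : Surjective π) (hker : π.ker.IsConvex) :
    ∃ _ : LinearOrder C, IsOrderedAddMonoid C ∧ Monotone π := by
  classical
  have := hasMemOrNegMem_imageCone hπ hker
  let := LinearOrder.mkOfAddGroupCone (π.imageCone hker)
  refine ⟨‹_›, IsOrderedAddMonoid.mkOfCone (π.imageCone hker), fun x y hxy ↦ ?_⟩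
  simpa using mem_imageCone hker (sub_nonneg.mpr hxy)

end ConvexKernel

section Splitting

variable {A C : Type*} [AddCommGroup A] [AddCommGroup C] {π : A →+ C}

theorem exists_rightInverse_of_surjective [AddGroup.FG A] [IsAddTorsionFree C]
    (hπ : Surjective π) :
    ∃ s : C →+ A, RightInverse s π := by
  have : Module.Finite ℤ C := Module.Finite.iff_addGroup_fg.mpr (AddGroup.fg_of_surjective hπ)
  obtain ⟨s, hs⟩ := π.toIntLinearMap.exists_rightInverse_of_surjective
    (LinearMap.range_eq_top.mpr hπ)
  exact ⟨s.toAddMonoidHom, fun c ↦ congr($hs c)⟩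

variable {B : AddSubgroup A} (hker : π.ker = B) {s : C →+ A} (hs : RightInverse s π)

def prodEquivOfRightInverse : A ≃+ C × B where
  toFun x := (π x, ⟨x - s (π x), by rw [← hker, mem_ker, map_sub, hs, sub_self]⟩)
  invFun p := s p.1 + p.2
  left_inv x := by simp
  right_inv := by
    rintro ⟨c, b, hb⟩
    have hπb : π b = 0 := by rwa [← mem_ker, hker]
    ext <;> simp [hs c, hπb]
  map_add' x y := by
    ext <;> simp only [map_add, Prod.fst_add, Prod.snd_add, AddSubgroup.coe_add]; abel

@[simp] theorem prodEquivOfRightInverse_apply_fst (x : A) :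
    (prodEquivOfRightInverse hker hs x).1 = π x := rfl

@[simp] theorem prodEquivOfRightInverse_apply_snd (x : A) :
    ((prodEquivOfRightInverse hker hs x).2 : A) = x - s (π x) := rfl

theorem toLex_prodEquivOfRightInverse_le_iff [LinearOrder A] [IsOrderedAddMonoid A]
    [LinearOrder C] (hmono : Monotone π) {x y : A} :
    toLex (prodEquivOfRightInverse hker hs x) ≤ toLex (prodEquivOfRightInverse hker hs y) ↔
      x ≤ y := by
  simp only [Prod.Lex.toLex_le_toLex, prodEquivOfRightInverse_apply_fst, ← Subtype.coe_le_coe,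
    prodEquivOfRightInverse_apply_snd]
  constructor
  · rintro (hlt | ⟨heq, hle⟩)
    · exact (hmono.reflect_lt hlt).le
    · simpa [heq] using hle
  · intro hxy
    rcases (hmono hxy).lt_or_eq with hlt | heq
    · exact .inl hlt
    · exact .inr ⟨heq, by simpa [heq] using hxy⟩

end Splitting

end AddMonoidHom

/-- A finitely generated totally ordered Abelian group `A` with a convex subgroup `B`
is isomorphic as an ordered group to the lexicographic product `(A/B) ×ₗ B`,
where `A/B` carries the induced order (realized as a linearly ordered group `C`
together with a surjective order-preserving homomorphism `A → C` with kernel `B`). -/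
theorem stmt_1 {A : Type*} [AddCommGroup A] [LinearOrder A] [IsOrderedAddMonoid A] (hfg : AddGroup.FG A)
    (B : AddSubgroup A)
    (hconv : ∀ x y : A, y ∈ B → 0 ≤ x → x ≤ y → x ∈ B) :
    ∃ (C : Type _) (_ : AddCommGroup C) (_ : LinearOrder C) (_ : IsOrderedAddMonoid C) (π : A →+ C),
      Function.Surjective π ∧ (∀ x y : A, x ≤ y → π x ≤ π y) ∧ π.ker = B ∧
      ∃ φ : A ≃+ C × B,
        ∀ x y : A, x ≤ y ↔
          ((φ x).1 < (φ y).1 ∨ ((φ x).1 = (φ y).1 ∧ (φ x).2 ≤ (φ y).2)) := by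
  have : Countable A := hfg.countable
  have : Countable (A ⧸ B) := (QuotientAddGroup.mk_surjective (s := B)).countable
  let π : A →+ Shrink.{u_2} (A ⧸ B) :=
    Shrink.addEquiv.symm.toAddMonoidHom.comp (QuotientAddGroup.mk' B)
  have hπ : Surjective π :=
    Shrink.addEquiv.symm.surjective.comp (QuotientAddGroup.mk'_surjective B)
  have hker : π.ker = B := by ext; simp [π]
  have hconv' : π.ker.IsConvex := by rw [hker]; exact hconv
  have := π.isAddTorsionFree_of_isConvex_ker hπ hconv'
  obtain ⟨s, hs⟩ := π.exists_rightInverse_of_surjective hπ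
  obtain ⟨_, _, hmono⟩ := π.exists_linearOrder_monotone_of_isConvex_ker hπ hconv'
  refine ⟨_, _, _, ‹_›, π, hπ, fun x y h ↦ hmono h, hker,
    AddMonoidHom.prodEquivOfRightInverse hker hs, fun x y ↦ ?_⟩
  rw [← Prod.Lex.toLex_le_toLex, AddMonoidHom.toLex_prodEquivOfRightInverse_le_iff hker hs hmono]
end

section
/- In the totally ordered Abelian group ℤ with distinguished element m, the equation ((n+1)·(|p·x − m|) − m) ⊔ (−x) ≥ 0 holds for all x ∈ ℤ if and only if m ≤ 0 or p does not divide m, where n is any natural number with m ≤ n, p is a natural number, and |y| denotes y ⊔ (−y). -/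
/-- In `ℤ` with distinguished element `m ≤ n`, the equation
`((n+1)·|p·x − m| − m) ⊔ (−x) ≥ 0` holds for all `x` iff `m ≤ 0` or `p ∤ m`. -/
theorem stmt_9 (m : ℤ) (n p : ℕ) (hmn : m ≤ n) :
    (∀ x : ℤ, 0 ≤ max (((n : ℤ) + 1) * |(p : ℤ) * x - m| - m) (-x)) ↔
      (m ≤ 0 ∨ ¬ ((p : ℤ) ∣ m)) := by
  constructor
  · intro h
    by_contra hc
    push_neg at hc
    obtain ⟨hm, k, hk⟩ := hc
    have hp : (p : ℤ) ≠ 0 := by intro h0; rw [h0] at hk; omega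
    have hppos : (0:ℤ) < p := lt_of_le_of_ne (Int.natCast_nonneg p) (Ne.symm hp)
    have hkpos : 0 < k := by nlinarith
    have := h k
    rw [show (p:ℤ) * k - m = 0 by omega] at this
    simp at this
    omega
  · rintro (hm | hpm) x
    · have : 0 ≤ ((n : ℤ) + 1) * |(p : ℤ) * x - m| - m := by
        have := abs_nonneg ((p : ℤ) * x - m)
        nlinarith
      exact le_max_of_le_left this
    · rcases le_or_gt x 0 with hx | hx
      · exact le_max_of_le_right (by omega)
      · refine le_max_of_le_left ?_
        have hne : (p : ℤ) * x - m ≠ 0 := by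
          intro h0
          exact hpm ⟨x, by linarith⟩
        have h1 : 1 ≤ |(p : ℤ) * x - m| := by
          rcases abs_pos.mpr hne with h
          omega
        nlinarith [abs_nonneg ((p:ℤ)*x - m)]
end

section
/- Let n ≥ 0 and m be integers. The inequality ((2n+1)·x − 2m) ⊔ (m − (2n+2)·x) ⊔ (−x) ≥ 0 holds for all integers x if and only if m ≤ n. -/
/-- In `ℤ`, the inequality `((2n+1)·x − 2m) ⊔ (m − (2n+2)·x) ⊔ (−x) ≥ 0`
holds for all integers `x` iff `m ≤ n`. -/
theorem stmt_10 (n : ℕ) (m : ℤ) :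
    (∀ x : ℤ, 0 ≤ max (max ((2 * (n : ℤ) + 1) * x - 2 * m) (m - (2 * (n : ℤ) + 2) * x)) (-x)) ↔
      m ≤ (n : ℤ) := by
  constructor
  · intro h
    by_contra hm
    push_neg at hm
    have hn : (0:ℤ) ≤ (n:ℤ) := Int.natCast_nonneg n
    rcases le_or_gt m (2 * (n:ℤ) + 1) with hc | hc
    · have H := h 1
      have : max (max ((2 * (n : ℤ) + 1) * 1 - 2 * m) (m - (2 * (n : ℤ) + 2) * 1)) (-1) < 0 := by
        apply max_lt (max_lt _ _) <;> linarith
      linarith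
    · set q := m / (2 * (n:ℤ) + 2) with hq
      have hb : (0:ℤ) < 2 * (n:ℤ) + 2 := by linarith
      have h1 : q * (2 * (n:ℤ) + 2) ≤ m := Int.ediv_mul_le m hb.ne'
      have h2 : m < (q + 1) * (2 * (n:ℤ) + 2) := Int.lt_ediv_add_one_mul_self m hb
      have hq0 : 0 ≤ q := Int.ediv_nonneg (by linarith) (by linarith)
      have H := h (q + 1)
      have : max (max ((2 * (n : ℤ) + 1) * (q + 1) - 2 * m) (m - (2 * (n : ℤ) + 2) * (q + 1)))
          (-(q + 1)) < 0 := by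
        apply max_lt (max_lt _ _) <;> nlinarith
      linarith
  · intro hm x
    rcases le_or_gt x 0 with hx | hx
    · exact le_max_of_le_right (by linarith)
    · have hx1 : 1 ≤ x := hx
      have hn : (0:ℤ) ≤ (n:ℤ) := Int.natCast_nonneg n
      refine le_max_of_le_left (le_max_of_le_left ?_)
      nlinarith
end

section
/- Let n, m be integers with n ≥ 0. In the lexicographic product ℤ ×ₗ ℤ with distinguished element (m, 0), the inequality ((2n+1)·v − 2·(m,0)) ⊔ ((m,0) − (2n+2)·v) ⊔ (−v) ≥ 0 holds for all v ∈ ℤ ×ₗ ℤ if and only if m ≤ n. -/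
/-!
If `2m ≥ N := 2n + 1`, the three terms are all negative at `v = (⌊2m/N⌋, -1)`: the first
coordinates are `≤ 0`, `< 0`, `< 0`, and the second coordinate `-N` of the first term breaks the
possible tie. If `2m < N` and `v = (a, b)`, then `a > 0` makes the first term positive
(`N a ≥ N > 2m`), `a < 0` makes `-v` positive, and for `a = 0` the sign of `m` and `b` decides.
-/

lemma exists_pos_mul_le_two_mul_lt_succ_mul {N m : ℤ} (hN : 0 < N) (hm : N ≤ 2 * m) :
    ∃ a : ℤ, 0 < a ∧ N * a ≤ 2 * m ∧ m < (N + 1) * a := by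
  have ha : 1 ≤ 2 * m / N := (Int.le_ediv_iff_mul_le hN).2 (by omega)
  have hle : N * (2 * m / N) ≤ 2 * m := Int.mul_ediv_self_le hN.ne'
  have hlt : 2 * m < N * (2 * m / N) + N := Int.lt_mul_ediv_self_add hN
  refine ⟨2 * m / N, by omega, hle, ?_⟩
  -- `2m < N (a + 1) ≤ 2 (N + 1) a` since `a ≥ 1`
  nlinarith

lemma exists_lex_terms_neg {N m : ℤ} (hN : 0 < N) (hm : N ≤ 2 * m) :
    ∃ v : ℤ × ℤ, toLex (N • v - (2 : ℤ) • ((m, 0) : ℤ × ℤ)) < 0 ∧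
      toLex (((m, 0) : ℤ × ℤ) - (N + 1) • v) < 0 ∧ toLex (-v) < 0 := by
  obtain ⟨a, ha, hle, hlt⟩ := exists_pos_mul_le_two_mul_lt_succ_mul hN hm
  refine ⟨(a, -1), ?_, ?_, ?_⟩ <;>
    simp only [Prod.smul_mk, smul_eq_mul, Prod.mk_sub_mk, Prod.neg_mk, Prod.Lex.lt_iff,
      ← toLex_zero, ← Prod.mk_zero_zero, ofLex_toLex] <;> omega

lemma lex_terms_max_nonneg {N m : ℤ} (hN : 0 < N) (hm : 2 * m < N) (v : ℤ × ℤ) :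
    0 ≤ max (max (toLex (N • v - (2 : ℤ) • ((m, 0) : ℤ × ℤ)))
      (toLex (((m, 0) : ℤ × ℤ) - (N + 1) • v))) (toLex (-v)) := by
  obtain ⟨a, b⟩ := v
  simp only [Prod.smul_mk, smul_eq_mul, Prod.mk_sub_mk, Prod.neg_mk, le_max_iff,
    Prod.Lex.le_iff, ← toLex_zero, ← Prod.mk_zero_zero, ofLex_toLex]
  rcases lt_trichotomy a 0 with ha | rfl | ha
  · omega
  · have hb : 0 < b → 0 < N * b := fun hb => mul_pos hN hb
    omega
  · have hNa : N ≤ N * a := le_mul_of_one_le_right hN.le ha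
    omega

/-- In the lexicographic product `ℤ ×ₗ ℤ` with distinguished element `(m, 0)`,
the inequality `((2n+1)·v − 2·(m,0)) ⊔ ((m,0) − (2n+2)·v) ⊔ (−v) ≥ 0` holds for
all `v` iff `m ≤ n`. -/
theorem stmt_11 (n : ℕ) (m : ℤ) :
    (∀ v : ℤ × ℤ,
        toLex ((0 : ℤ), (0 : ℤ)) ≤
          max (max (toLex ((2 * (n : ℤ) + 1) • v - (2 : ℤ) • ((m, 0) : ℤ × ℤ)))
                (toLex (((m, 0) : ℤ × ℤ) - (2 * (n : ℤ) + 2) • v)))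
            (toLex (-v))) ↔
      m ≤ (n : ℤ) := by
  have hN : (0 : ℤ) < 2 * n + 1 := by positivity
  have hsucc : (2 * n + 2 : ℤ) = 2 * n + 1 + 1 := by ring
  simp only [Prod.mk_zero_zero, toLex_zero, hsucc]
  constructor
  · intro h
    by_contra! hm
    obtain ⟨v, h₁, h₂, h₃⟩ := exists_lex_terms_neg hN (by omega : 2 * (n : ℤ) + 1 ≤ 2 * m)
    exact (h v).not_gt (max_lt (max_lt h₁ h₂) h₃)
  · exact fun hm => lex_terms_max_nonneg hN (by omega)
end
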